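/- arXiv:2005.04349 — 5 statements merged into one kernel-verified Lean document; each statement's English description precedes it below -/
import Mathlib

section
/- Let C be a strongly subadditive capacity, i.e., C(E₁ ∪ E₂) + C(E₁ ∩ E₂) ≤ C(E₁) + C(E₂) for all sets E₁, E₂, which is also monotone with C(∅)=0. Then the Choquet integral functional w ↦ ∫₀^∞ C({w > t}) dt is subadditive on nonnegative functions: ∫(w₁+w₂) dC ≤ ∫w₁ dC + ∫w₂ dC. -/
open MeasureTheory Set ENNReal Filter

/-!
Discretise at mesh `h > 0` with `fᵢ = ⌊wᵢ / h⌋₊`. Comparing the antitone function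
`t ↦ C {w > t}` with its Riemann sums, the integral of `C {w₁ + w₂ > t}` over `(2h, ∞)`
is at most `h ∑ⱼ C {f₁ + f₂ > j}`, while `h ∑ⱼ C {fᵢ > j}` is at most the Choquet
integral of `wᵢ`. For ℕ-valued functions this discrete sum is subadditive: adding the
indicator of a set `B` to `f` costs at most `C B`, by strong subadditivity applied level by
level to `{f > N}` and `{f ≥ N} ∩ B`, and `g` is the sum of the indicators of its level sets
`{g > j}`. Letting `h → 0` gives the theorem.
-/

section NatChoquet

variable {X : Type*} (C : Set X → ℝ≥0∞)

noncomputable def natChoquetIntegral (f : X → ℕ) : ℝ≥0∞ :=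
  ∑' j : ℕ, C {x | j < f x}

variable {C} (hstrong : ∀ E₁ E₂ : Set X, C (E₁ ∪ E₂) + C (E₁ ∩ E₂) ≤ C E₁ + C E₂)
include hstrong

theorem sum_range_add_indicator_add_le (f : X → ℕ) (B : Set X) (N : ℕ) :
    ∑ j ∈ Finset.range N, C {x | j < f x + B.indicator 1 x} + C ({x | N ≤ f x} ∩ B)
      ≤ ∑ j ∈ Finset.range N, C {x | j < f x} + C B := by
  induction N with
  | zero => simp
  | succ N ih =>
    set S' := ∑ j ∈ Finset.range N, C {x | j < f x + B.indicator 1 x}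
    set S := ∑ j ∈ Finset.range N, C {x | j < f x}
    have hunion : {x | N < f x + B.indicator 1 x} = {x | N < f x} ∪ ({x | N ≤ f x} ∩ B) := by
      ext x
      by_cases hx : x ∈ B
      · simp only [mem_ofPred_eq, mem_union, mem_inter_iff, hx, indicator_of_mem, Pi.one_apply,
          and_true]
        omega
      · simp only [mem_ofPred_eq, mem_union, mem_inter_iff, hx, not_false_eq_true,
          indicator_of_notMem, add_zero, and_false, or_false]
    have hinter : {x | N < f x} ∩ ({x | N ≤ f x} ∩ B) = {x | N < f x} ∩ B := by
      have hsub : {x | N < f x} ⊆ {x | N ≤ f x} := fun x hx => Nat.le_of_lt hx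
      rw [← inter_assoc, inter_eq_left.mpr hsub]
    have key := hstrong {x | N < f x} ({x | N ≤ f x} ∩ B)
    rw [hinter] at key
    calc ∑ j ∈ Finset.range (N + 1), C {x | j < f x + B.indicator 1 x}
            + C ({x | N < f x} ∩ B)
        = S' + (C ({x | N < f x} ∪ ({x | N ≤ f x} ∩ B)) + C ({x | N < f x} ∩ B)) := by
          rw [Finset.sum_range_succ, hunion, add_assoc]
      _ ≤ S' + (C {x | N < f x} + C ({x | N ≤ f x} ∩ B)) := by gcongr
      _ = (S' + C ({x | N ≤ f x} ∩ B)) + C {x | N < f x} := by ring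
      _ ≤ (S + C B) + C {x | N < f x} := by gcongr
      _ = ∑ j ∈ Finset.range (N + 1), C {x | j < f x} + C B := by
          rw [Finset.sum_range_succ]; ring

theorem natChoquetIntegral_add_indicator_le (f : X → ℕ) (B : Set X) :
    natChoquetIntegral C (fun x => f x + B.indicator 1 x) ≤ natChoquetIntegral C f + C B := by
  rw [natChoquetIntegral, ENNReal.tsum_eq_iSup_nat]
  refine iSup_le fun N => ?_
  calc ∑ j ∈ Finset.range N, C {x | j < f x + B.indicator 1 x}
      ≤ ∑ j ∈ Finset.range N, C {x | j < f x + B.indicator 1 x} + C ({x | N ≤ f x} ∩ B) :=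
        le_self_add
    _ ≤ ∑ j ∈ Finset.range N, C {x | j < f x} + C B :=
        sum_range_add_indicator_add_le hstrong f B N
    _ ≤ natChoquetIntegral C f + C B := by gcongr; exact ENNReal.sum_le_tsum _

theorem natChoquetIntegral_add_min_le (f g : X → ℕ) (n : ℕ) :
    natChoquetIntegral C (fun x => f x + min (g x) n)
      ≤ natChoquetIntegral C f + ∑ j ∈ Finset.range n, C {x | j < g x} := by
  induction n with
  | zero => simp
  | succ n ih =>
    have hsplit : (fun x => f x + min (g x) (n + 1))
        = fun x => (f x + min (g x) n) + {x | n < g x}.indicator 1 x := by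
      ext x
      by_cases hx : n < g x <;>
        simp only [mem_ofPred_eq, hx, indicator_of_mem, indicator_of_notMem, not_false_eq_true,
          Pi.one_apply] <;> omega
    calc natChoquetIntegral C (fun x => f x + min (g x) (n + 1))
        ≤ natChoquetIntegral C (fun x => f x + min (g x) n) + C {x | n < g x} := by
          rw [hsplit]; exact natChoquetIntegral_add_indicator_le hstrong _ _
      _ ≤ natChoquetIntegral C f + ∑ j ∈ Finset.range (n + 1), C {x | j < g x} := by
          rw [Finset.sum_range_succ, ← add_assoc]; gcongr

theorem natChoquetIntegral_add_le (f g : X → ℕ) :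
    natChoquetIntegral C (f + g) ≤ natChoquetIntegral C f + natChoquetIntegral C g := by
  rw [natChoquetIntegral, ENNReal.tsum_eq_iSup_nat]
  refine iSup_le fun N => ?_
  have htrunc : ∀ k ∈ Finset.range N,
      {x | k < (f + g) x} = {x | k < f x + min (g x) N} := by
    intro k hk
    ext x
    simp only [Finset.mem_range] at hk
    simp only [mem_ofPred_eq, Pi.add_apply]
    omega
  calc ∑ k ∈ Finset.range N, C {x | k < (f + g) x}
      = ∑ k ∈ Finset.range N, C {x | k < f x + min (g x) N} :=
        Finset.sum_congr rfl fun k hk => by rw [htrunc k hk]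
    _ ≤ natChoquetIntegral C (fun x => f x + min (g x) N) := ENNReal.sum_le_tsum _
    _ ≤ natChoquetIntegral C f + ∑ j ∈ Finset.range N, C {x | j < g x} :=
        natChoquetIntegral_add_min_le hstrong f g N
    _ ≤ natChoquetIntegral C f + natChoquetIntegral C g := by
        gcongr; exact ENNReal.sum_le_tsum _

end NatChoquet

section RiemannSum

open Function

variable {φ : ℝ → ℝ≥0∞} {ψ : ℕ → ℝ≥0∞} {a h : ℝ}

theorem ofReal_mul_tsum_le_setLIntegral_Ioi (hh : 0 ≤ h)
    (hψ : ∀ j : ℕ, ∀ t ∈ Ioo (a + j * h) (a + (j + 1) * h), ψ j ≤ φ t) :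
    ENNReal.ofReal h * ∑' j, ψ j ≤ ∫⁻ t in Ioi a, φ t := by
  have hgrid : Monotone fun j : ℕ => a + j * h := fun i j hij => by dsimp only; gcongr
  have hdisj : Pairwise (Disjoint on fun j : ℕ => Ioo (a + j * h) (a + (j + 1) * h)) := by
    simpa using hgrid.pairwise_disjoint_on_Ioo_succ
  have hsub : (⋃ j : ℕ, Ioo (a + j * h) (a + (j + 1) * h)) ⊆ Ioi a :=
    iUnion_subset fun j t ht => (le_add_of_nonneg_right (by positivity)).trans_lt ht.1
  calc ENNReal.ofReal h * ∑' j, ψ j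
      = ∑' j : ℕ, ∫⁻ _ in Ioo (a + j * h) (a + (j + 1) * h), ψ j := by
        rw [← ENNReal.tsum_mul_left]
        congr 1; ext j
        rw [setLIntegral_const, Real.volume_Ioo, mul_comm]
        ring_nf
    _ ≤ ∑' j : ℕ, ∫⁻ t in Ioo (a + j * h) (a + (j + 1) * h), φ t :=
        ENNReal.tsum_le_tsum fun j => setLIntegral_mono' measurableSet_Ioo (hψ j)
    _ = ∫⁻ t in ⋃ j : ℕ, Ioo (a + j * h) (a + (j + 1) * h), φ t :=
        (lintegral_iUnion (fun _ => measurableSet_Ioo) hdisj φ).symm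
    _ ≤ ∫⁻ t in Ioi a, φ t := lintegral_mono_set hsub

theorem setLIntegral_Ioi_le_ofReal_mul_tsum (hh : 0 < h)
    (hψ : ∀ j : ℕ, ∀ t ∈ Ico (a + j * h) (a + (j + 1) * h), φ t ≤ ψ j) :
    ∫⁻ t in Ioi a, φ t ≤ ENNReal.ofReal h * ∑' j, ψ j := by
  have hcover : Ioi a ⊆ ⋃ j : ℕ, Ico (a + j * h) (a + (j + 1) * h) := by
    intro t ht
    have hpos : 0 ≤ (t - a) / h := div_nonneg (sub_nonneg.mpr (le_of_lt ht)) hh.le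
    refine mem_iUnion.mpr ⟨⌊(t - a) / h⌋₊, ?_, ?_⟩
    · have := Nat.floor_le hpos
      rw [le_div_iff₀ hh] at this
      linarith
    · have := Nat.lt_floor_add_one ((t - a) / h)
      rw [div_lt_iff₀ hh] at this
      linarith
  calc ∫⁻ t in Ioi a, φ t
      ≤ ∫⁻ t in ⋃ j : ℕ, Ico (a + j * h) (a + (j + 1) * h), φ t := lintegral_mono_set hcover
    _ ≤ ∑' j : ℕ, ∫⁻ t in Ico (a + j * h) (a + (j + 1) * h), φ t := lintegral_iUnion_le _ _
    _ ≤ ∑' j : ℕ, ∫⁻ _ in Ico (a + j * h) (a + (j + 1) * h), ψ j :=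
        ENNReal.tsum_le_tsum fun j => setLIntegral_mono' measurableSet_Ico (hψ j)
    _ = ENNReal.ofReal h * ∑' j, ψ j := by
        rw [← ENNReal.tsum_mul_left]
        congr 1; ext j
        rw [setLIntegral_const, Real.volume_Ico, mul_comm]
        ring_nf

theorem setLIntegral_Ioi_le_of_forall_lt {c : ℝ≥0∞}
    (hφ : ∀ b, a < b → ∫⁻ t in Ioi b, φ t ≤ c) : ∫⁻ t in Ioi a, φ t ≤ c := by
  have hunion : Ioi a = ⋃ n : ℕ, Ioi (a + 1 / (n + 1)) := by
    ext t
    simp only [mem_Ioi, mem_iUnion]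
    constructor
    · intro ht
      obtain ⟨n, hn⟩ := exists_nat_one_div_lt (sub_pos.mpr ht)
      exact ⟨n, by linarith⟩
    · rintro ⟨n, hn⟩
      have : (0:ℝ) < 1 / (n + 1) := by positivity
      linarith
  have hdir : Directed (· ⊆ ·) fun n : ℕ => Ioi (a + 1 / (n + 1)) :=
    Monotone.directed_le fun m n hmn => Ioi_subset_Ioi (by gcongr)
  rw [hunion, setLIntegral_iUnion_of_directed _ hdir]
  exact iSup_le fun n => hφ _ (lt_add_of_pos_right a (by positivity))

end RiemannSum

section Choquet

variable {X : Type*} (C : Set X → ℝ≥0∞)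

noncomputable def choquetIntegral (w : X → ℝ) : ℝ≥0∞ :=
  ∫⁻ t in Ioi 0, C {x | t < w x}

variable {C} (hmono : ∀ E₁ E₂ : Set X, E₁ ⊆ E₂ → C E₁ ≤ C E₂)
include hmono

theorem ofReal_mul_natChoquetIntegral_floor_le (w : X → ℝ) {h : ℝ} (hh : 0 < h) :
    ENNReal.ofReal h * natChoquetIntegral C (fun x => ⌊w x / h⌋₊) ≤ choquetIntegral C w := by
  refine ofReal_mul_tsum_le_setLIntegral_Ioi hh.le fun j t ht => hmono _ _ fun x hx => ?_
  have hj : ((j + 1 : ℕ) : ℝ) ≤ w x / h := (Nat.le_floor_iff' j.succ_ne_zero).mp hx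
  rw [le_div_iff₀ hh] at hj
  push_cast at hj
  simp only [zero_add, mem_Ioo] at ht
  exact ht.2.trans_le hj

theorem setLIntegral_Ioi_two_mul_le_ofReal_mul_natChoquetIntegral (w₁ w₂ : X → ℝ) {h : ℝ}
    (hh : 0 < h) :
    ∫⁻ t in Ioi (2 * h), C {x | t < w₁ x + w₂ x}
      ≤ ENNReal.ofReal h *
          natChoquetIntegral C ((fun x => ⌊w₁ x / h⌋₊) + fun x => ⌊w₂ x / h⌋₊) := by
  refine setLIntegral_Ioi_le_ofReal_mul_tsum hh fun k t ht => hmono _ _ fun x hx => ?_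
  have hfloor (w : X → ℝ) : w x < (⌊w x / h⌋₊ + 1) * h := by
    rw [← div_lt_iff₀ hh]; exact Nat.lt_floor_add_one _
  have hlt : ((k : ℝ) + 2) * h < ((⌊w₁ x / h⌋₊ + ⌊w₂ x / h⌋₊ : ℕ) + 2) * h := by
    push_cast
    linarith [ht.1, show t < w₁ x + w₂ x from hx, hfloor w₁, hfloor w₂]
  exact_mod_cast lt_of_add_lt_add_right (lt_of_mul_lt_mul_right hlt hh.le)

variable (hstrong : ∀ E₁ E₂ : Set X, C (E₁ ∪ E₂) + C (E₁ ∩ E₂) ≤ C E₁ + C E₂)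
include hstrong

theorem choquetIntegral_add_le (w₁ w₂ : X → ℝ) :
    choquetIntegral C (w₁ + w₂) ≤ choquetIntegral C w₁ + choquetIntegral C w₂ := by
  refine setLIntegral_Ioi_le_of_forall_lt fun b hb => ?_
  set h := b / 2
  have hh : 0 < h := half_pos hb
  set f₁ : X → ℕ := fun x => ⌊w₁ x / h⌋₊
  set f₂ : X → ℕ := fun x => ⌊w₂ x / h⌋₊
  calc ∫⁻ t in Ioi b, C {x | t < (w₁ + w₂) x}
      = ∫⁻ t in Ioi (2 * h), C {x | t < w₁ x + w₂ x} := by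
        rw [mul_div_cancel₀ b two_ne_zero]; rfl
    _ ≤ ENNReal.ofReal h * natChoquetIntegral C (f₁ + f₂) :=
        setLIntegral_Ioi_two_mul_le_ofReal_mul_natChoquetIntegral hmono w₁ w₂ hh
    _ ≤ ENNReal.ofReal h * natChoquetIntegral C f₁
          + ENNReal.ofReal h * natChoquetIntegral C f₂ := by
        rw [← mul_add]; gcongr; exact natChoquetIntegral_add_le hstrong f₁ f₂
    _ ≤ choquetIntegral C w₁ + choquetIntegral C w₂ := by
        gcongr <;> exact ofReal_mul_natChoquetIntegral_floor_le hmono _ hh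

end Choquet

theorem choquet_triangle_of_stronglySubadditive_general {X : Type*} (C : Set X → ℝ≥0∞)
    (hmono : ∀ E₁ E₂ : Set X, E₁ ⊆ E₂ → C E₁ ≤ C E₂)
    (hstrong : ∀ E₁ E₂ : Set X, C (E₁ ∪ E₂) + C (E₁ ∩ E₂) ≤ C E₁ + C E₂)
    (w₁ w₂ : X → ℝ) :
    ∫⁻ t in Set.Ioi (0:ℝ), C {x | t < w₁ x + w₂ x}
      ≤ ∫⁻ t in Set.Ioi (0:ℝ), C {x | t < w₁ x}
        + ∫⁻ t in Set.Ioi (0:ℝ), C {x | t < w₂ x} := by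
  -- The right-hand side parses as `∫⁻ t in Ioi 0, (C {x | t < w₁ x} + ∫⁻ …)`.
  calc ∫⁻ t in Ioi 0, C {x | t < w₁ x + w₂ x}
      ≤ choquetIntegral C w₁ + choquetIntegral C w₂ :=
        choquetIntegral_add_le hmono hstrong w₁ w₂
    _ ≤ choquetIntegral C w₁ + choquetIntegral C w₂ * volume (Ioi (0:ℝ)) := by
        rw [Real.volume_Ioi]; gcongr; exact le_mul_of_one_le_right' le_top
    _ = _ := by rw [choquetIntegral, choquetIntegral, ← setLIntegral_const,
        ← lintegral_add_right _ measurable_const]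

/-- Choquet's theorem: if a monotone capacity `C` with `C ∅ = 0` is strongly subadditive,
then the Choquet integral is subadditive on nonnegative functions. -/
theorem choquet_triangle_of_stronglySubadditive {X : Type*} (C : Set X → ℝ≥0∞)
    (hmono : ∀ E₁ E₂ : Set X, E₁ ⊆ E₂ → C E₁ ≤ C E₂)
    (hempty : C ∅ = 0)
    (hstrong : ∀ E₁ E₂ : Set X, C (E₁ ∪ E₂) + C (E₁ ∩ E₂) ≤ C E₁ + C E₂)
    (w₁ w₂ : X → ℝ) (hw₁ : ∀ x, 0 ≤ w₁ x) (hw₂ : ∀ x, 0 ≤ w₂ x) :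
    ∫⁻ t in Set.Ioi (0:ℝ), C {x | t < w₁ x + w₂ x}
      ≤ ∫⁻ t in Set.Ioi (0:ℝ), C {x | t < w₁ x}
        + ∫⁻ t in Set.Ioi (0:ℝ), C {x | t < w₂ x} :=
  choquet_triangle_of_stronglySubadditive_general C hmono hstrong w₁ w₂
end

section
/- (Hardy's inequality) Let q ∈ [1,∞), α > 0, and f : (0,∞) → [0,∞) measurable. Then (∫₀^∞ (∫_ρ^∞ f(t) dt)^q ρ^α dρ/ρ)^{1/q} ≤ (q/α) (∫₀^∞ (t f(t))^q t^α dt/t)^{1/q}. -/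
open MeasureTheory Set ENNReal Filter

/-!
Hölder's inequality on `(ρ, ∞)` against the weight `t ^ (-s - 1)`, `s = α / q`, whose integral is
`ρ ^ (-s) / s`, bounds `(∫_ρ^∞ f) ^ q` by `s ^ (1 - q) ρ ^ (s - sq)` times
`∫_ρ^∞ (t f(t)) ^ q t ^ (α - 1 - s) dt`. Integrating against `ρ ^ (α - 1)` and exchanging the order
of integration, the inner integral `∫_0^t ρ ^ (s - 1) dρ = t ^ s / s` restores the weight
`t ^ (α - 1)` and produces the constant `s ^ (-q) = (q / α) ^ q`.
-/
theorem rpow_lintegral_le_lintegral_rpow_mul_rpow {α : Type*} [MeasurableSpace α] {μ : Measure α}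
    {f w : α → ℝ≥0∞} (hf : AEMeasurable f μ) (hw : AEMeasurable w μ)
    (hw_ne_zero : ∀ᵐ x ∂μ, w x ≠ 0) (hw_ne_top : ∀ᵐ x ∂μ, w x ≠ ∞) {q : ℝ} (hq : 1 ≤ q) :
    (∫⁻ x, f x ∂μ) ^ q ≤ (∫⁻ x, f x ^ q * w x ^ (1 - q) ∂μ) * (∫⁻ x, w x ∂μ) ^ (q - 1) := by
  have hq0 : 0 < q := by linarith
  have h_exp : (1 - q) * (1 / q) + (1 - 1 / q) = 0 := by field_simp; ring
  have hf_eq : (fun x => f x) =ᵐ[μ]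
      fun x => (f x ^ q * w x ^ (1 - q)) ^ (1 / q) * w x ^ (1 - 1 / q) := by
    filter_upwards [hw_ne_zero, hw_ne_top] with x h0 htop
    rw [ENNReal.mul_rpow_of_nonneg _ _ (by positivity), ← ENNReal.rpow_mul, ← ENNReal.rpow_mul,
      mul_assoc, ← ENNReal.rpow_add _ _ h0 htop, mul_one_div_cancel hq0.ne', ENNReal.rpow_one,
      h_exp, ENNReal.rpow_zero, mul_one]
  have holder := ENNReal.lintegral_mul_norm_pow_le (μ := μ)
    (by fun_prop : AEMeasurable (fun x => f x ^ q * w x ^ (1 - q)) μ) hw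
    (by positivity : (0:ℝ) ≤ 1 / q) (by rw [sub_nonneg]; exact (div_le_one hq0).2 hq)
    (add_sub_cancel _ _)
  rw [← lintegral_congr_ae hf_eq] at holder
  calc (∫⁻ x, f x ∂μ) ^ q
      ≤ ((∫⁻ x, f x ^ q * w x ^ (1 - q) ∂μ) ^ (1 / q) * (∫⁻ x, w x ∂μ) ^ (1 - 1 / q)) ^ q :=
        ENNReal.rpow_le_rpow holder hq0.le
    _ = _ := by
        rw [ENNReal.mul_rpow_of_nonneg _ _ hq0.le, ← ENNReal.rpow_mul, ← ENNReal.rpow_mul,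
          one_div_mul_cancel hq0.ne', ENNReal.rpow_one, sub_mul, one_mul,
          one_div_mul_cancel hq0.ne']

theorem lintegral_Ioi_mul_lintegral_Ioi (a : ℝ) {w h : ℝ → ℝ≥0∞} (hw : Measurable w)
    (hh : Measurable h) :
    ∫⁻ ρ in Ioi a, w ρ * ∫⁻ t in Ioi ρ, h t = ∫⁻ t in Ioi a, (∫⁻ ρ in Ioo a t, w ρ) * h t := by
  set G : ℝ → ℝ → ℝ≥0∞ := fun ρ t => (Ioo a t).indicator (fun ρ => w ρ * h t) ρ
  have hG : Measurable (Function.uncurry G) := by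
    refine Measurable.ite ?_ (by fun_prop) measurable_const
    exact (measurableSet_lt measurable_const measurable_fst).inter
      (measurableSet_lt measurable_fst measurable_snd)
  have h_inner_t (ρ : ℝ) :
      ∫⁻ t, G ρ t = (Ioi a).indicator (fun ρ => w ρ * ∫⁻ t in Ioi ρ, h t) ρ := by
    by_cases hρ : a < ρ
    · rw [indicator_of_mem (mem_Ioi.2 hρ), ← lintegral_const_mul _ hh,
        ← lintegral_indicator measurableSet_Ioi]
      congr 1 with t
      by_cases ht : ρ < t <;> simp [G, hρ, ht]
    · simp [G, hρ, indicator_of_notMem]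
  have h_inner_ρ (t : ℝ) : ∫⁻ ρ, G ρ t = (∫⁻ ρ in Ioo a t, w ρ) * h t := by
    rw [lintegral_indicator measurableSet_Ioo, lintegral_mul_const _ hw]
  calc ∫⁻ ρ in Ioi a, w ρ * ∫⁻ t in Ioi ρ, h t
      = ∫⁻ ρ, ∫⁻ t, G ρ t := by
        rw [← lintegral_indicator measurableSet_Ioi]; simp_rw [h_inner_t]
    _ = ∫⁻ t, ∫⁻ ρ, G ρ t := lintegral_lintegral_swap hG.aemeasurable
    _ = ∫⁻ t in Ioi a, (∫⁻ ρ in Ioo a t, w ρ) * h t := by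
        simp_rw [h_inner_ρ]
        rw [← lintegral_indicator measurableSet_Ioi]
        congr 1 with t
        by_cases ht : a < t
        · rw [indicator_of_mem (mem_Ioi.2 ht)]
        · rw [indicator_of_notMem (mt mem_Ioi.1 ht), Ioo_eq_empty (by simpa using ht)]; simp

theorem lintegral_Ioi_ofReal_rpow_neg_sub_one {s ρ : ℝ} (hs : 0 < s) (hρ : 0 < ρ) :
    ∫⁻ t in Ioi ρ, ENNReal.ofReal (t ^ (-s - 1)) = ENNReal.ofReal (ρ ^ (-s) / s) := by
  have h_nonneg : 0 ≤ᵐ[volume.restrict (Ioi ρ)] fun t : ℝ => t ^ (-s - 1) := by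
    filter_upwards [ae_restrict_mem measurableSet_Ioi] with t ht
    exact Real.rpow_nonneg (hρ.trans ht).le _
  rw [← ofReal_integral_eq_lintegral_ofReal (integrableOn_Ioi_rpow_of_lt (by linarith) hρ)
    h_nonneg, integral_Ioi_rpow_of_lt (by linarith) hρ, sub_add_cancel, neg_div_neg_eq]

theorem lintegral_Ioo_zero_ofReal_rpow_sub_one {s t : ℝ} (hs : 0 < s) (ht : 0 < t) :
    ∫⁻ ρ in Ioo 0 t, ENNReal.ofReal (ρ ^ (s - 1)) = ENNReal.ofReal (t ^ s / s) := by
  have h_int : IntegrableOn (fun ρ : ℝ => ρ ^ (s - 1)) (Ioc 0 t) :=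
    (intervalIntegrable_iff_integrableOn_Ioc_of_le ht.le).1
      (intervalIntegral.intervalIntegrable_rpow' (by linarith))
  have h_nonneg : 0 ≤ᵐ[volume.restrict (Ioc 0 t)] fun ρ : ℝ => ρ ^ (s - 1) := by
    filter_upwards [ae_restrict_mem measurableSet_Ioc] with ρ hρ
    exact Real.rpow_nonneg hρ.1.le _
  rw [Measure.restrict_congr_set Ioo_ae_eq_Ioc,
    ← ofReal_integral_eq_lintegral_ofReal h_int h_nonneg, ← intervalIntegral.integral_of_le ht.le,
    integral_rpow (Or.inl (by linarith)), sub_add_cancel, Real.zero_rpow hs.ne', sub_zero]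

theorem lintegral_Ioi_ofReal_rpow_sub_one_mul_lintegral_Ioi {s : ℝ} (hs : 0 < s)
    {h : ℝ → ℝ≥0∞} (hh : Measurable h) :
    ∫⁻ ρ in Ioi 0, ENNReal.ofReal (ρ ^ (s - 1)) * ∫⁻ t in Ioi ρ, h t
      = ∫⁻ t in Ioi 0, ENNReal.ofReal (t ^ s / s) * h t := by
  rw [lintegral_Ioi_mul_lintegral_Ioi 0 (by fun_prop) hh]
  refine setLIntegral_congr_fun measurableSet_Ioi fun t (ht : 0 < t) => ?_
  rw [lintegral_Ioo_zero_ofReal_rpow_sub_one hs ht]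

theorem rpow_lintegral_Ioi_le {f : ℝ → ℝ≥0∞} (hf : Measurable f) {q s ρ : ℝ} (hq : 1 ≤ q)
    (hs : 0 < s) (hρ : 0 < ρ) :
    (∫⁻ t in Ioi ρ, f t) ^ q ≤
      (∫⁻ t in Ioi ρ, (ENNReal.ofReal t * f t) ^ q * ENNReal.ofReal (t ^ (s * q - 1 - s))) *
        ENNReal.ofReal (ρ ^ (-s) / s) ^ (q - 1) := by
  have h_weight_pos : ∀ᵐ t ∂volume.restrict (Ioi ρ), ENNReal.ofReal (t ^ (-s - 1)) ≠ 0 := by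
    filter_upwards [ae_restrict_mem measurableSet_Ioi] with t ht
    exact ENNReal.ofReal_ne_zero_iff.2 (Real.rpow_pos_of_pos (hρ.trans ht) _)
  have holder := rpow_lintegral_le_lintegral_rpow_mul_rpow hf.aemeasurable (by fun_prop)
    h_weight_pos (ae_of_all _ fun _ => ENNReal.ofReal_ne_top) hq
  rw [lintegral_Ioi_ofReal_rpow_neg_sub_one hs hρ] at holder
  refine holder.trans_eq
    (congrArg (· * _) (setLIntegral_congr_fun measurableSet_Ioi fun t ht => ?_))
  have ht : 0 < t := hρ.trans ht
  rw [ENNReal.mul_rpow_of_nonneg _ _ (by linarith), ENNReal.ofReal_rpow_of_pos ht,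
    ENNReal.ofReal_rpow_of_pos (Real.rpow_pos_of_pos ht _), ← Real.rpow_mul ht.le,
    mul_right_comm, ← ENNReal.ofReal_mul (by positivity), ← Real.rpow_add ht, mul_comm]
  ring_nf

theorem rpow_lintegral_Ioi_mul_rpow_le {f : ℝ → ℝ≥0∞} (hf : Measurable f) {q s ρ : ℝ}
    (hq : 1 ≤ q) (hs : 0 < s) (hρ : 0 < ρ) :
    (∫⁻ t in Ioi ρ, f t) ^ q * ENNReal.ofReal (ρ ^ (s * q - 1)) ≤
      ENNReal.ofReal (s ^ (1 - q)) * (ENNReal.ofReal (ρ ^ (s - 1)) *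
        ∫⁻ t in Ioi ρ, (ENNReal.ofReal t * f t) ^ q * ENNReal.ofReal (t ^ (s * q - 1 - s))) := by
  have h_weight : (ρ ^ (-s) / s) ^ (q - 1) * ρ ^ (s * q - 1) = s ^ (1 - q) * ρ ^ (s - 1) := by
    rw [Real.div_rpow (by positivity) hs.le, ← Real.rpow_mul hρ.le, div_mul_eq_mul_div,
      ← Real.rpow_add hρ, div_eq_mul_inv, ← Real.rpow_neg hs.le, neg_sub, mul_comm]
    ring_nf
  calc (∫⁻ t in Ioi ρ, f t) ^ q * ENNReal.ofReal (ρ ^ (s * q - 1))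
      ≤ (∫⁻ t in Ioi ρ, (ENNReal.ofReal t * f t) ^ q * ENNReal.ofReal (t ^ (s * q - 1 - s))) *
          ENNReal.ofReal (ρ ^ (-s) / s) ^ (q - 1) * ENNReal.ofReal (ρ ^ (s * q - 1)) := by
        gcongr; exact rpow_lintegral_Ioi_le hf hq hs hρ
    _ = _ := by
        rw [ENNReal.ofReal_rpow_of_nonneg (by positivity) (by linarith), mul_assoc,
          ← ENNReal.ofReal_mul (by positivity), h_weight, ENNReal.ofReal_mul (by positivity)]
        ring

theorem hardy_inequality_rpow {f : ℝ → ℝ≥0∞} (hf : Measurable f) {q α : ℝ} (hq : 1 ≤ q)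
    (hα : 0 < α) :
    ∫⁻ ρ in Ioi 0, (∫⁻ t in Ioi ρ, f t) ^ q * ENNReal.ofReal (ρ ^ (α - 1))
      ≤ ENNReal.ofReal ((q / α) ^ q) *
        ∫⁻ t in Ioi 0, (ENNReal.ofReal t * f t) ^ q * ENNReal.ofReal (t ^ (α - 1)) := by
  have hq0 : 0 < q := by linarith
  obtain ⟨s, hs, rfl⟩ : ∃ s > 0, α = s * q :=
    ⟨α / q, div_pos hα hq0, (div_mul_cancel₀ _ hq0.ne').symm⟩
  have h_const : s ^ (1 - q) * s⁻¹ = (q / (s * q)) ^ q := by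
    rw [show q / (s * q) = s⁻¹ by field_simp, Real.inv_rpow hs.le, ← Real.rpow_neg_one,
      ← Real.rpow_add hs, ← Real.rpow_neg hs.le]
    ring_nf
  calc ∫⁻ ρ in Ioi 0, (∫⁻ t in Ioi ρ, f t) ^ q * ENNReal.ofReal (ρ ^ (s * q - 1))
      ≤ ∫⁻ ρ in Ioi 0, ENNReal.ofReal (s ^ (1 - q)) * (ENNReal.ofReal (ρ ^ (s - 1)) *
          ∫⁻ t in Ioi ρ, (ENNReal.ofReal t * f t) ^ q * ENNReal.ofReal (t ^ (s * q - 1 - s))) :=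
        setLIntegral_mono' measurableSet_Ioi fun _ hρ =>
          rpow_lintegral_Ioi_mul_rpow_le hf hq hs hρ
    _ = ENNReal.ofReal (s ^ (1 - q)) * ∫⁻ t in Ioi 0, ENNReal.ofReal (t ^ s / s) *
          ((ENNReal.ofReal t * f t) ^ q * ENNReal.ofReal (t ^ (s * q - 1 - s))) := by
        rw [lintegral_const_mul' _ _ ENNReal.ofReal_ne_top,
          lintegral_Ioi_ofReal_rpow_sub_one_mul_lintegral_Ioi hs (by fun_prop)]
    _ = ENNReal.ofReal (s ^ (1 - q)) * ∫⁻ t in Ioi 0, ENNReal.ofReal s⁻¹ *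
          ((ENNReal.ofReal t * f t) ^ q * ENNReal.ofReal (t ^ (s * q - 1))) := by
        congr 1
        refine setLIntegral_congr_fun measurableSet_Ioi fun t (ht : 0 < t) => ?_
        rw [mul_left_comm, ← ENNReal.ofReal_mul (by positivity), mul_left_comm _ (_ ^ q),
          ← ENNReal.ofReal_mul (by positivity), div_mul_eq_mul_div, ← Real.rpow_add ht,
          div_eq_inv_mul]
        ring_nf
    _ = _ := by
        rw [lintegral_const_mul' _ _ ENNReal.ofReal_ne_top, ← mul_assoc,
          ← ENNReal.ofReal_mul (by positivity), h_const]

/-- Hardy's inequality: for `q ∈ [1,∞)`, `α > 0` and `f : (0,∞) → [0,∞]` measurable,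
`(∫₀^∞ (∫_ρ^∞ f(t) dt)^q ρ^α dρ/ρ)^{1/q} ≤ (q/α) (∫₀^∞ (t f(t))^q t^α dt/t)^{1/q}`. -/
theorem hardy_inequality (q α : ℝ) (hq : 1 ≤ q) (hα : 0 < α)
    (f : ℝ → ℝ≥0∞) (hf : Measurable f) :
    (∫⁻ ρ in Set.Ioi (0:ℝ),
        (∫⁻ t in Set.Ioi ρ, f t) ^ q * ENNReal.ofReal (ρ ^ (α - 1))) ^ (1/q)
      ≤ ENNReal.ofReal (q / α) *
        (∫⁻ t in Set.Ioi (0:ℝ),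
            (ENNReal.ofReal t * f t) ^ q * ENNReal.ofReal (t ^ (α - 1))) ^ (1/q) := by
  have hq0 : 0 < q := by linarith
  calc _ ≤ (ENNReal.ofReal ((q / α) ^ q) *
          ∫⁻ t in Ioi 0, (ENNReal.ofReal t * f t) ^ q * ENNReal.ofReal (t ^ (α - 1))) ^ (1 / q) :=
        ENNReal.rpow_le_rpow (hardy_inequality_rpow hf hq hα) (by positivity)
    _ = _ := by
        rw [ENNReal.mul_rpow_of_nonneg _ _ (by positivity),
          ENNReal.ofReal_rpow_of_nonneg (by positivity) (by positivity),
          ← Real.rpow_mul (by positivity), mul_one_div_cancel hq0.ne', Real.rpow_one]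
end

section
/- Let μ be a finite nonnegative measure on ℝⁿ, 0 < α < n, s > 1, and ρ ∈ (0,5]. If s > 2, then the integral I₁ = ∫_{B_ρ(x)} (∫_{|z−x|<2ρ} |z−y|^{α−n} dμ(z))^{1/(s−1)} dy satisfies I₁ ≤ c·μ(B_{2ρ}(x))^{1/(s−1)}·ρ^{n+(α−n)/(s−1)} with c = c(n,α,s), via Hölder's inequality with exponents s−1 and (s−1)/(s−2) followed by Fubini's theorem. -/
/-! The Riesz kernel is homogeneous: translating and dilating gives
`∫_{B_R(z)} |z - y|^(α - n) dy = K R^α` with `K = ∫_{B_1(0)} |u|^(α - n) du`, which is finite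
because `α > 0`. As `1/(s-1) ≤ 1`, Hölder's inequality on `B_ρ(x)` bounds `I₁` by
`(∫_{B_ρ(x)} ∫_{B_{2ρ}(x)} |z - y|^(α - n) dμ(z) dy)^(1/(s-1)) |B_ρ(x)|^(1 - 1/(s-1))`; after
swapping the integrals, `B_ρ(x) ⊆ B_{3ρ}(z)` for `z ∈ B_{2ρ}(x)` bounds the inner integral by
`K (3ρ)^α`. -/

open MeasureTheory Set ENNReal Filter Metric Module

theorem lintegral_rpow_le_lintegral_rpow_mul_measure_univ {α : Type*} [MeasurableSpace α]
    {ν : Measure α} {f : α → ℝ≥0∞} (hf : AEMeasurable f ν) {θ : ℝ} (hθ₀ : 0 ≤ θ) (hθ₁ : θ ≤ 1) :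
    ∫⁻ a, f a ^ θ ∂ν ≤ (∫⁻ a, f a ∂ν) ^ θ * ν univ ^ (1 - θ) := by
  simpa using lintegral_mul_norm_pow_le hf (aemeasurable_const (b := 1)) hθ₀ (sub_nonneg.2 hθ₁)
    (add_sub_cancel θ 1)

theorem ofReal_mul_rpow_rpow_mul_ofReal_pow_rpow {a ρ : ℝ} (ha : 0 < a) (hρ : 0 < ρ)
    (α θ : ℝ) (d : ℕ) :
    ENNReal.ofReal ((a * ρ) ^ α) ^ θ * ENNReal.ofReal (ρ ^ d) ^ (1 - θ) =
      ENNReal.ofReal (a ^ (α * θ)) * ENNReal.ofReal (ρ ^ (d + (α - d) * θ)) := by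
  rw [← Real.rpow_natCast, ENNReal.ofReal_rpow_of_pos (by positivity),
    ENNReal.ofReal_rpow_of_pos (by positivity), ← ENNReal.ofReal_mul (by positivity),
    ← ENNReal.ofReal_mul (by positivity), ← Real.rpow_mul (by positivity),
    ← Real.rpow_mul hρ.le, Real.mul_rpow ha.le hρ.le, mul_assoc, ← Real.rpow_add hρ]
  ring_nf

section HaarMeasure

variable {E : Type*} [NormedAddCommGroup E] [NormedSpace ℝ E] [FiniteDimensional ℝ E]
  [MeasurableSpace E] [BorelSpace E] (μ : Measure E) [μ.IsAddHaarMeasure]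

theorem map_add_smul_addHaar (z : E) {R : ℝ} (hR : 0 < R) :
    μ.map (fun u => z + R • u) = ENNReal.ofReal (R ^ finrank ℝ E)⁻¹ • μ := by
  have : (fun u : E => z + R • u) = (z + ·) ∘ (R • ·) := rfl
  rw [this, ← Measure.map_map (measurable_const_add z) (measurable_const_smul R),
    Measure.map_addHaar_smul μ hR.ne', Measure.map_smul, map_add_left_eq_self,
    abs_of_pos (by positivity)]

theorem setLIntegral_ball_norm_sub_rpow (β : ℝ) (z : E) {R : ℝ} (hR : 0 < R) :
    ∫⁻ y in ball z R, ENNReal.ofReal (‖z - y‖ ^ β) ∂μ =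
      ENNReal.ofReal (R ^ (β + finrank ℝ E)) * ∫⁻ u in ball 0 1, ENNReal.ofReal (‖u‖ ^ β) ∂μ := by
  have hpre : (fun u : E => z + R • u) ⁻¹' ball z R = ball 0 1 := by
    ext u
    simp [dist_eq_norm, norm_smul, abs_of_pos hR, mul_lt_iff_lt_one_right hR]
  have hcomp := setLIntegral_map (μ := μ) (measurableSet_ball (x := z) (ε := R))
    (f := fun y => ENNReal.ofReal (‖z - y‖ ^ β)) (by fun_prop) (g := fun u : E => z + R • u)
    (by fun_prop)
  rw [map_add_smul_addHaar μ z hR, hpre, setLIntegral_smul_measure] at hcomp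
  simp only [sub_add_cancel_left, norm_neg, norm_smul, Real.norm_of_nonneg hR.le,
    Real.mul_rpow hR.le (norm_nonneg _), ENNReal.ofReal_mul (Real.rpow_nonneg hR.le _)] at hcomp
  rw [lintegral_const_mul' _ _ ofReal_ne_top] at hcomp
  have hRd : 0 < R ^ finrank ℝ E := by positivity
  calc ∫⁻ y in ball z R, ENNReal.ofReal (‖z - y‖ ^ β) ∂μ
      = ENNReal.ofReal (R ^ finrank ℝ E) * (ENNReal.ofReal (R ^ finrank ℝ E)⁻¹ •
          ∫⁻ y in ball z R, ENNReal.ofReal (‖z - y‖ ^ β) ∂μ) := by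
        rw [smul_eq_mul, ← mul_assoc, ← ENNReal.ofReal_mul hRd.le, mul_inv_cancel₀ hRd.ne',
          ENNReal.ofReal_one, one_mul]
    _ = _ := by
        rw [hcomp, Real.rpow_add hR, Real.rpow_natCast, ENNReal.ofReal_mul (by positivity)]
        ring

theorem setLIntegral_ball_lintegral_norm_sub_rpow_le (ν : Measure E) [SFinite ν] (β : ℝ)
    (x : E) {ρ : ℝ} (hρ : 0 < ρ) :
    ∫⁻ y in ball x ρ, ∫⁻ z in ball x (2 * ρ), ENNReal.ofReal (‖z - y‖ ^ β) ∂ν ∂μ ≤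
      ENNReal.ofReal ((3 * ρ) ^ (β + finrank ℝ E)) *
        (∫⁻ u in ball 0 1, ENNReal.ofReal (‖u‖ ^ β) ∂μ) * ν (ball x (2 * ρ)) := by
  have hkernel : Measurable fun p : E × E => ENNReal.ofReal (‖p.2 - p.1‖ ^ β) := by fun_prop
  rw [lintegral_lintegral_swap hkernel.aemeasurable, ← setLIntegral_const]
  refine setLIntegral_mono measurable_const fun z hz => ?_
  rw [← setLIntegral_ball_norm_sub_rpow μ β z (by positivity)]
  refine lintegral_mono_set fun y hy => ?_
  calc dist y z ≤ dist y x + dist z x := dist_triangle_right y z x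
    _ < 3 * ρ := by linarith [mem_ball.1 hy, mem_ball.1 hz]

variable [Nontrivial E]

theorem setLIntegral_unitBall_norm_rpow_lt_top {β : ℝ} (hβ : -(finrank ℝ E : ℝ) < β) :
    ∫⁻ u in ball 0 1, ENNReal.ofReal (‖u‖ ^ β) ∂μ < ∞ := by
  have hint : IntegrableOn (fun u : E => ‖u‖ ^ β) (ball 0 1) μ :=
    integrableOn_ball_of_norm_le_rpow (C := 1) (α := -β) Module.finrank_pos (by linarith)
      (ae_of_all _ fun u => by simp [abs_of_nonneg (Real.rpow_nonneg (norm_nonneg u) β)])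
      (measurable_norm.pow_const β).aestronglyMeasurable
  exact hint.lintegral_lt_top

theorem measure_unitBall_le_setLIntegral_norm_rpow {β : ℝ} (hβ : β ≤ 0) :
    μ (ball 0 1) ≤ ∫⁻ u in ball 0 1, ENNReal.ofReal (‖u‖ ^ β) ∂μ := by
  rw [← setLIntegral_one]
  refine setLIntegral_mono_ae (by fun_prop) ?_
  filter_upwards [measure_singleton (μ := μ) 0 |> compl_mem_ae_iff.2] with u hu hu1
  rw [ENNReal.one_le_ofReal]
  exact Real.one_le_rpow_of_pos_of_le_one_of_nonpos (norm_pos_iff.2 hu)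
    (mem_ball_zero_iff.1 hu1).le hβ

theorem setLIntegral_ball_rpow_lintegral_norm_sub_rpow_le (ν : Measure E) [SFinite ν] (β : ℝ)
    {θ : ℝ} (hθ₀ : 0 ≤ θ) (hθ₁ : θ ≤ 1) (x : E) {ρ : ℝ} (hρ : 0 < ρ) :
    ∫⁻ y in ball x ρ, (∫⁻ z in ball x (2 * ρ), ENNReal.ofReal (‖z - y‖ ^ β) ∂ν) ^ θ ∂μ ≤
      (ENNReal.ofReal ((3 * ρ) ^ (β + finrank ℝ E)) *
          (∫⁻ u in ball 0 1, ENNReal.ofReal (‖u‖ ^ β) ∂μ) * ν (ball x (2 * ρ))) ^ θ *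
        (ENNReal.ofReal (ρ ^ finrank ℝ E) * μ (ball 0 1)) ^ (1 - θ) := by
  have hF : Measurable fun y => ∫⁻ z in ball x (2 * ρ), ENNReal.ofReal (‖z - y‖ ^ β) ∂ν :=
    Measurable.lintegral_prod_right (by fun_prop)
  calc _ ≤ (∫⁻ y in ball x ρ, ∫⁻ z in ball x (2 * ρ), ENNReal.ofReal (‖z - y‖ ^ β) ∂ν ∂μ) ^ θ *
          μ (ball x ρ) ^ (1 - θ) := by
        simpa using lintegral_rpow_le_lintegral_rpow_mul_measure_univ
          (ν := μ.restrict (ball x ρ)) hF.aemeasurable hθ₀ hθ₁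
    _ ≤ _ := by
        rw [Measure.addHaar_ball μ x hρ.le]
        gcongr
        exact setLIntegral_ball_lintegral_norm_sub_rpow_le μ ν β x hρ

end HaarMeasure

/-- For `s > 2`, `0 < α < n`, there is `c = c(n,α,s)` such that for every finite nonnegative
measure `μ`, every `x` and every `ρ ∈ (0,5]`,
`I₁ = ∫_{B_ρ(x)} (∫_{|z−x|<2ρ} |z−y|^{α−n} dμ(z))^{1/(s−1)} dy
   ≤ c·μ(B_{2ρ}(x))^{1/(s−1)}·ρ^{n+(α−n)/(s−1)}`. -/
theorem riesz_potential_ball_estimate_s_gt_two (n : ℕ) (α s : ℝ)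
    (hα : 0 < α) (hαn : α < n) (hs : 2 < s) :
    ∃ c : ℝ≥0∞, 0 < c ∧ c ≠ ⊤ ∧
      ∀ (μ : Measure (EuclideanSpace ℝ (Fin n))), IsFiniteMeasure μ →
        ∀ (x : EuclideanSpace ℝ (Fin n)) (ρ : ℝ), 0 < ρ → ρ ≤ 5 →
          (∫⁻ y in Metric.ball x ρ,
              (∫⁻ z in Metric.ball x (2*ρ),
                  ENNReal.ofReal (‖z - y‖ ^ (α - n)) ∂μ) ^ (1/(s-1)))
            ≤ c * (μ (Metric.ball x (2*ρ))) ^ (1/(s-1)) *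
                ENNReal.ofReal (ρ ^ ((n:ℝ) + (α - n)/(s-1))) := by
  set θ := 1 / (s - 1) with hθ
  have hθ₀ : 0 ≤ θ := by rw [hθ, one_div_nonneg]; linarith
  have hθ₁ : θ ≤ 1 := by rw [hθ, div_le_one (by linarith)]; linarith
  have : Nontrivial (EuclideanSpace ℝ (Fin n)) := Module.nontrivial_of_finrank_pos (R := ℝ)
    (by rw [finrank_euclideanSpace_fin]; exact_mod_cast hα.trans hαn)
  set K := ∫⁻ u in ball (0 : EuclideanSpace ℝ (Fin n)) 1, ENNReal.ofReal (‖u‖ ^ (α - n))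
  set V := volume (ball (0 : EuclideanSpace ℝ (Fin n)) 1)
  have hV₀ : 0 < V := measure_ball_pos _ _ one_pos
  have hV : V ≠ ⊤ := measure_ball_lt_top.ne
  have hK₀ : 0 < K := hV₀.trans_le (measure_unitBall_le_setLIntegral_norm_rpow _ (by linarith))
  have hK : K ≠ ⊤ := (setLIntegral_unitBall_norm_rpow_lt_top volume
    (by rw [finrank_euclideanSpace_fin]; linarith)).ne
  have h3 : 0 < ENNReal.ofReal (3 ^ (α * θ)) := ENNReal.ofReal_pos.2 (by positivity)
  refine ⟨K ^ θ * ENNReal.ofReal (3 ^ (α * θ)) * V ^ (1 - θ),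
    ENNReal.mul_pos (ENNReal.mul_pos (ENNReal.rpow_pos hK₀ hK).ne' h3.ne').ne'
      (ENNReal.rpow_pos hV₀ hV).ne', by finiteness, fun μ _ x ρ hρ _ => ?_⟩
  have hd : α - n + finrank ℝ (EuclideanSpace ℝ (Fin n)) = α := by
    rw [finrank_euclideanSpace_fin]; ring
  calc _ ≤ (ENNReal.ofReal ((3 * ρ) ^ α) * K * μ (ball x (2 * ρ))) ^ θ *
          (ENNReal.ofReal (ρ ^ n) * V) ^ (1 - θ) := by
        have := setLIntegral_ball_rpow_lintegral_norm_sub_rpow_le volume μ (α - n) hθ₀ hθ₁ x hρ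
        rwa [hd, finrank_euclideanSpace_fin] at this
    _ = K ^ θ * V ^ (1 - θ) * μ (ball x (2 * ρ)) ^ θ *
          (ENNReal.ofReal ((3 * ρ) ^ α) ^ θ * ENNReal.ofReal (ρ ^ n) ^ (1 - θ)) := by
        rw [ENNReal.mul_rpow_of_nonneg _ _ hθ₀, ENNReal.mul_rpow_of_nonneg _ _ hθ₀,
          ENNReal.mul_rpow_of_nonneg _ _ (sub_nonneg.2 hθ₁)]
        ring
    _ = _ := by
        rw [ofReal_mul_rpow_rpow_mul_ofReal_pow_rpow three_pos hρ, hθ, mul_one_div (α - n)]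
        ring
end

section
/- Let μ be a finite nonnegative measure on ℝⁿ, 0 < α < n, and 2 − α/n < s ≤ 2. Then for ρ > 0 and x ∈ ℝⁿ, ∫_{B_ρ(x)} (∫_{|z−x|<2ρ} |z−y|^{(α−n)} dμ(z))^{1/(s−1)} dy ≤ c·μ(B_{2ρ}(x))^{1/(s−1)}·ρ^{n+(α−n)/(s−1)}, where c = c(n,α,s), via Minkowski's integral inequality. -/
open MeasureTheory Set ENNReal Filter

lemma ball_rpow_bound (n : ℕ) (hn : 0 < n) (β : ℝ) (hβ : 0 < β) (hβn : β < n) :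
    ∃ C : ℝ≥0∞, 0 < C ∧ C ≠ ⊤ ∧ ∀ (z : EuclideanSpace ℝ (Fin n)) (R : ℝ), 0 < R →
      (∫⁻ y in Metric.ball z R, ENNReal.ofReal (‖y - z‖ ^ (-β)))
        ≤ C * ENNReal.ofReal (R ^ ((n:ℝ) - β)) := by
  have : Nontrivial (EuclideanSpace ℝ (Fin n)) := by
    have : Nonempty (Fin n) := ⟨⟨0, hn⟩⟩
    infer_instance
  set V : ℝ≥0∞ := volume (Metric.ball (0 : EuclideanSpace ℝ (Fin n)) 1) with hV
  have hVpos : 0 < V := Metric.measure_ball_pos _ _ one_pos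
  have hVtop : V ≠ ⊤ := measure_ball_lt_top.ne
  have hnβ : (0:ℝ) < (n:ℝ) - β := by
    have : β < (n:ℝ) := hβn
    linarith
  set q : ℝ := (2:ℝ) ^ (-((n:ℝ) - β)) with hq
  have hq0 : 0 < q := Real.rpow_pos_of_pos two_pos _
  have hq1 : q < 1 := by
    rw [hq]
    exact Real.rpow_lt_one_of_one_lt_of_neg one_lt_two (by linarith)
  set C : ℝ≥0∞ := V * ENNReal.ofReal ((2:ℝ) ^ β) * (1 - ENNReal.ofReal q)⁻¹ with hC
  have hq1' : ENNReal.ofReal q < 1 := by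
    rw [← ENNReal.ofReal_one]; exact ENNReal.ofReal_lt_ofReal_iff_of_nonneg hq0.le |>.2 hq1
  have hsub : (1:ℝ≥0∞) - ENNReal.ofReal q ≠ 0 := by
    simpa [tsub_eq_zero_iff_le] using hq1'.not_ge
  refine ⟨C, ?_, ?_, ?_⟩
  · apply ENNReal.mul_pos
    · exact (ENNReal.mul_pos hVpos.ne' (by positivity)).ne'
    · simp [hsub]
  · rw [hC]
    refine ENNReal.mul_ne_top (ENNReal.mul_ne_top hVtop ENNReal.ofReal_ne_top) ?_
    simp [hsub]
  intro z R hR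
  -- annuli
  set A : ℕ → Set (EuclideanSpace ℝ (Fin n)) :=
    fun k => Metric.ball z (R / 2 ^ k) \ Metric.ball z (R / 2 ^ (k + 1)) with hA
  have hcover : Metric.ball z R ⊆ {z} ∪ ⋃ k, A k := by
    intro y hy
    rcases eq_or_ne y z with rfl | hyz
    · exact Or.inl rfl
    right
    have hd : 0 < dist y z := dist_pos.2 hyz
    have hdR : dist y z < R := Metric.mem_ball.1 hy
    have hex : ∃ k : ℕ, R / 2 ^ (k + 1) ≤ dist y z := by
      obtain ⟨k, hk⟩ := pow_unbounded_of_one_lt (R / dist y z) (one_lt_two (α := ℝ))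
      refine ⟨k, ?_⟩
      rw [div_lt_iff₀ hd] at hk
      rw [div_le_iff₀ (by positivity : (0:ℝ) < 2 ^ (k+1))]
      have h2 : (2:ℝ) ^ (k+1) = 2 * 2 ^ k := by ring
      nlinarith [pow_pos (two_pos (α := ℝ)) k]
    classical
    let k := Nat.find hex
    refine mem_iUnion.2 ⟨k, ?_, ?_⟩
    · rcases Nat.eq_zero_or_pos k with hk0 | hk0
      · simpa [hk0] using hdR
      · have := Nat.find_min hex (m := k - 1) (by omega)
        push_neg at this
        have hk1 : k - 1 + 1 = k := by omega
        rw [hk1] at this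
        simpa [Metric.mem_ball, dist_comm] using this
    · intro hmem
      exact absurd (Nat.find_spec hex) (not_le.2 (by simpa [Metric.mem_ball] using hmem))
  have hbound : ∀ k : ℕ,
      (∫⁻ y in A k, ENNReal.ofReal (‖y - z‖ ^ (-β)))
        ≤ ENNReal.ofReal (R ^ ((n:ℝ) - β) * (2:ℝ) ^ β * q ^ k) * V := by
    intro k
    have h1 : ∀ y ∈ A k, ENNReal.ofReal (‖y - z‖ ^ (-β))
        ≤ ENNReal.ofReal ((R / 2 ^ (k+1)) ^ (-β)) := by
      intro y hy
      apply ENNReal.ofReal_le_ofReal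
      apply Real.rpow_le_rpow_of_nonpos (by positivity) _ (by linarith)
      have := hy.2
      simpa [Metric.mem_ball, dist_eq_norm, not_lt] using this
    calc (∫⁻ y in A k, ENNReal.ofReal (‖y - z‖ ^ (-β)))
        ≤ ∫⁻ _ in A k, ENNReal.ofReal ((R / 2 ^ (k+1)) ^ (-β)) :=
          setLIntegral_mono' (measurableSet_ball.diff measurableSet_ball) h1
      _ = ENNReal.ofReal ((R / 2 ^ (k+1)) ^ (-β)) * volume (A k) := setLIntegral_const _ _
      _ ≤ ENNReal.ofReal ((R / 2 ^ (k+1)) ^ (-β)) *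
            (ENNReal.ofReal ((R / 2 ^ k) ^ ((n:ℝ))) * V) := by
          gcongr
          have := Measure.addHaar_ball (volume : Measure (EuclideanSpace ℝ (Fin n))) z
            (r := R / 2 ^ k) (by positivity)
          calc volume (A k) ≤ volume (Metric.ball z (R / 2 ^ k)) :=
                measure_mono diff_subset
            _ = ENNReal.ofReal ((R / 2 ^ k) ^ ((n:ℝ))) * V := by
                rw [this]
                congr 2
                · rw [← Real.rpow_natCast]
                  congr 1
                  simp
      _ = ENNReal.ofReal (R ^ ((n:ℝ) - β) * (2:ℝ) ^ β * q ^ k) * V := by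
          rw [← mul_assoc, ← ENNReal.ofReal_mul (by positivity)]
          congr 2
          have p1 : (0:ℝ) < (R / 2 ^ (k+1)) ^ (-β) :=
            Real.rpow_pos_of_pos (by positivity) _
          have p2 : (0:ℝ) < (R / 2 ^ k) ^ ((n:ℝ)) :=
            Real.rpow_pos_of_pos (by positivity) _
          have p3 : (0:ℝ) < R ^ ((n:ℝ) - β) := Real.rpow_pos_of_pos hR _
          have p4 : (0:ℝ) < (2:ℝ) ^ β := Real.rpow_pos_of_pos two_pos _
          have p5 : (0:ℝ) < q ^ k := pow_pos hq0 _
          rw [← Real.exp_log (mul_pos p1 p2), ← Real.exp_log (mul_pos (mul_pos p3 p4) p5)]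
          congr 1
          rw [Real.log_mul p1.ne' p2.ne', Real.log_mul (mul_pos p3 p4).ne' p5.ne',
            Real.log_mul p3.ne' p4.ne', Real.log_rpow (by positivity),
            Real.log_rpow (by positivity), Real.log_rpow hR, Real.log_rpow two_pos,
            Real.log_pow, Real.log_div hR.ne' (by positivity),
            Real.log_div hR.ne' (by positivity), Real.log_pow, Real.log_pow]
          have hlq : Real.log q = (-((n:ℝ) - β)) * Real.log 2 := by
            rw [hq, Real.log_rpow two_pos]
          rw [hlq]
          push_cast
          ring
  calc (∫⁻ y in Metric.ball z R, ENNReal.ofReal (‖y - z‖ ^ (-β)))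
      ≤ ∫⁻ y in {z} ∪ ⋃ k, A k, ENNReal.ofReal (‖y - z‖ ^ (-β)) :=
        lintegral_mono_set hcover
    _ ≤ (∫⁻ y in {z}, ENNReal.ofReal (‖y - z‖ ^ (-β)))
          + ∫⁻ y in ⋃ k, A k, ENNReal.ofReal (‖y - z‖ ^ (-β)) := lintegral_union_le _ _ _
    _ ≤ 0 + ∑' k, ∫⁻ y in A k, ENNReal.ofReal (‖y - z‖ ^ (-β)) := by
        gcongr
        · rw [lintegral_singleton]
          simp [Real.zero_rpow (by linarith : -β ≠ 0)]
        · exact lintegral_iUnion_le _ _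
    _ ≤ ∑' k, ENNReal.ofReal (R ^ ((n:ℝ) - β) * (2:ℝ) ^ β * q ^ k) * V := by
        rw [zero_add]; exact ENNReal.tsum_le_tsum hbound
    _ ≤ C * ENNReal.ofReal (R ^ ((n:ℝ) - β)) := by
        have : ∀ k : ℕ, ENNReal.ofReal (R ^ ((n:ℝ) - β) * (2:ℝ) ^ β * q ^ k) * V
            = (ENNReal.ofReal (R ^ ((n:ℝ) - β)) * ENNReal.ofReal ((2:ℝ) ^ β) * V)
              * ENNReal.ofReal q ^ k := by
          intro k
          rw [ENNReal.ofReal_mul (by positivity), ENNReal.ofReal_mul (by positivity),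
            ENNReal.ofReal_pow hq0.le]
          ring
        rw [tsum_congr this, ENNReal.tsum_mul_left, ENNReal.tsum_geometric, hC]
        apply le_of_eq
        ring


lemma jensen_lintegral {X : Type*} [MeasurableSpace X] (ν : Measure X) [IsFiniteMeasure ν]
    {f : X → ℝ≥0∞} (hf : AEMeasurable f ν) {p : ℝ} (hp : 1 ≤ p) :
    (∫⁻ x, f x ∂ν) ^ p ≤ (ν univ) ^ (p - 1) * ∫⁻ x, f x ^ p ∂ν := by
  rcases eq_or_lt_of_le hp with h1 | h1
  · simp [← h1]
  · have hpq : p.HolderConjugate (Real.conjExponent p) := Real.HolderConjugate.conjExponent h1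
    have hp0 : (0:ℝ) < p := lt_trans one_pos h1
    have H := ENNReal.lintegral_mul_le_Lp_mul_Lq ν hpq hf (aemeasurable_const (b := (1:ℝ≥0∞)))
    simp only [Pi.mul_apply, mul_one, ENNReal.one_rpow, lintegral_one] at H
    have H2 := ENNReal.rpow_le_rpow H hp0.le
    calc (∫⁻ x, f x ∂ν) ^ p
        ≤ ((∫⁻ a, f a ^ p ∂ν) ^ (1 / p) * ν univ ^ (1 / Real.conjExponent p)) ^ p := H2
      _ = (ν univ) ^ (p - 1) * ∫⁻ x, f x ^ p ∂ν := by
          rw [ENNReal.mul_rpow_of_nonneg _ _ hp0.le, ← ENNReal.rpow_mul, ← ENNReal.rpow_mul,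
            one_div_mul_cancel hp0.ne', ENNReal.rpow_one, mul_comm]
          congr 2
          rw [Real.conjExponent]
          field_simp


lemma meas_ofReal_rpow_aux {X : Type*} [MeasurableSpace X] {g : X → ℝ} (hg : Measurable g)
    (h0 : ∀ x, 0 ≤ g x) {β : ℝ} (hβ : β ≠ 0) :
    Measurable (fun x => ENNReal.ofReal (g x ^ β)) := by
  have h : (fun x => ENNReal.ofReal (g x ^ β))
      = fun x => if g x = 0 then 0 else ENNReal.ofReal (Real.exp (Real.log (g x) * β)) := by
    ext x
    rcases eq_or_lt_of_le (h0 x) with h | h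
    · simp [← h, Real.zero_rpow hβ]
    · rw [if_neg h.ne', Real.rpow_def_of_pos h]
  rw [h]
  exact Measurable.ite (hg (measurableSet_singleton 0)) measurable_const
    ((Real.measurable_exp.comp ((Real.measurable_log.comp hg).mul_const β)).ennreal_ofReal)

/-- For `2 − α/n < s ≤ 2`, `0 < α < n`, there is `c = c(n,α,s)` such that for every finite
nonnegative measure `μ`, every `x` and every `ρ > 0`,
`∫_{B_ρ(x)} (∫_{|z−x|<2ρ} |z−y|^{α−n} dμ(z))^{1/(s−1)} dy
   ≤ c·μ(B_{2ρ}(x))^{1/(s−1)}·ρ^{n+(α−n)/(s−1)}`, via Minkowski's integral inequality. -/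
theorem riesz_potential_ball_estimate_s_le_two (n : ℕ) (α s : ℝ)
    (hα : 0 < α) (hαn : α < n) (hs1 : 2 - α / n < s) (hs2 : s ≤ 2) :
    ∃ c : ℝ≥0∞, 0 < c ∧ c ≠ ⊤ ∧
      ∀ (μ : Measure (EuclideanSpace ℝ (Fin n))), IsFiniteMeasure μ →
        ∀ (x : EuclideanSpace ℝ (Fin n)) (ρ : ℝ), 0 < ρ →
          (∫⁻ y in Metric.ball x ρ,
              (∫⁻ z in Metric.ball x (2*ρ),
                  ENNReal.ofReal (‖z - y‖ ^ (α - n)) ∂μ) ^ (1/(s-1)))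
            ≤ c * (μ (Metric.ball x (2*ρ))) ^ (1/(s-1)) *
                ENNReal.ofReal (ρ ^ ((n:ℝ) + (α - n)/(s-1))) := by
  have hn : 0 < n := by
    by_contra h
    push_neg at h
    interval_cases n <;> simp_all <;> linarith
  have hnR : (0:ℝ) < n := by exact_mod_cast hn
  have hs0 : (0:ℝ) < s - 1 := by
    have h1 : α / n < 1 := (div_lt_one hnR).2 hαn
    linarith
  set p : ℝ := 1 / (s - 1) with hpdef
  have hp1 : 1 ≤ p := by
    rw [hpdef, le_div_iff₀ hs0]
    linarith
  have hp0 : (0:ℝ) < p := lt_of_lt_of_le one_pos hp1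
  set β : ℝ := ((n:ℝ) - α) / (s - 1) with hβdef
  have hβ : 0 < β := div_pos (by linarith) hs0
  have hβn : β < n := by
    rw [hβdef, div_lt_iff₀ hs0]
    have h1 : 1 - α / n < s - 1 := by linarith
    have h2 : (n:ℝ) * (1 - α / n) = n - α := by field_simp
    nlinarith
  obtain ⟨C, hC0, hCt, hCb⟩ := ball_rpow_bound n hn β hβ hβn
  set c : ℝ≥0∞ := C * ENNReal.ofReal ((3:ℝ) ^ ((n:ℝ) - β)) with hc
  have hexp : (n:ℝ) + (α - n)/(s-1) = (n:ℝ) - β := by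
    rw [hβdef]; ring
  have hmβ : (α - (n:ℝ)) * p = -β := by
    rw [hβdef, hpdef]; ring
  refine ⟨c, ?_, ?_, ?_⟩
  · exact ENNReal.mul_pos hC0.ne' (by positivity)
  · exact ENNReal.mul_ne_top hCt ENNReal.ofReal_ne_top
  intro μ _ x ρ hρ
  set B1 := Metric.ball x ρ
  set B2 := Metric.ball x (2*ρ)
  set K : ℝ≥0∞ := (μ B2) ^ (p - 1) with hK
  have hKtop : K ≠ ⊤ := ENNReal.rpow_ne_top_of_nonneg (by linarith) (measure_ne_top μ B2)
  have hmeas : Measurable (fun q : EuclideanSpace ℝ (Fin n) × EuclideanSpace ℝ (Fin n) =>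
      ENNReal.ofReal (‖q.2 - q.1‖ ^ (-β))) :=
    meas_ofReal_rpow_aux (measurable_snd.sub measurable_fst).norm (fun _ => norm_nonneg _)
      (by linarith)
  have step1 : (∫⁻ y in B1,
        (∫⁻ z in B2, ENNReal.ofReal (‖z - y‖ ^ (α - n)) ∂μ) ^ p)
      ≤ ∫⁻ y in B1, K * ∫⁻ z in B2, ENNReal.ofReal (‖z - y‖ ^ (-β)) ∂μ := by
    apply lintegral_mono
    intro y
    have hfm : AEMeasurable (fun z => ENNReal.ofReal (‖z - y‖ ^ (α - (n:ℝ)))) (μ.restrict B2) :=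
      (meas_ofReal_rpow_aux ((measurable_id.sub_const y)).norm (fun _ => norm_nonneg _)
        (by linarith : α - (n:ℝ) ≠ 0)).aemeasurable
    have := jensen_lintegral (μ.restrict B2) hfm hp1
    rw [Measure.restrict_apply_univ] at this
    refine this.trans (le_of_eq ?_)
    congr 1
    apply lintegral_congr
    intro z
    rw [ENNReal.ofReal_rpow_of_nonneg (Real.rpow_nonneg (norm_nonneg _) _) hp0.le,
      ← Real.rpow_mul (norm_nonneg _), hmβ]
  have step2 : (∫⁻ y in B1, K * ∫⁻ z in B2, ENNReal.ofReal (‖z - y‖ ^ (-β)) ∂μ)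
      = K * ∫⁻ z in B2, (∫⁻ y in B1, ENNReal.ofReal (‖z - y‖ ^ (-β))) ∂μ := by
    rw [lintegral_const_mul' _ _ hKtop]
    congr 1
    exact lintegral_lintegral_swap hmeas.aemeasurable
  have step3 : (∫⁻ z in B2, (∫⁻ y in B1, ENNReal.ofReal (‖z - y‖ ^ (-β))) ∂μ)
      ≤ (C * ENNReal.ofReal ((3*ρ) ^ ((n:ℝ) - β))) * μ B2 := by
    rw [← setLIntegral_const B2 (C * ENNReal.ofReal ((3*ρ) ^ ((n:ℝ) - β)))]
    apply setLIntegral_mono' measurableSet_ball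
    intro z hz
    have hsub : B1 ⊆ Metric.ball z (3*ρ) := by
      intro y hy
      have h1 : dist y x < ρ := Metric.mem_ball.1 hy
      have h2 : dist z x < 2*ρ := Metric.mem_ball.1 hz
      have := dist_triangle y x z
      rw [Metric.mem_ball]
      rw [dist_comm z x] at h2
      linarith [dist_triangle y x z]
    calc (∫⁻ y in B1, ENNReal.ofReal (‖z - y‖ ^ (-β)))
        ≤ ∫⁻ y in Metric.ball z (3*ρ), ENNReal.ofReal (‖z - y‖ ^ (-β)) :=
          lintegral_mono_set hsub
      _ = ∫⁻ y in Metric.ball z (3*ρ), ENNReal.ofReal (‖y - z‖ ^ (-β)) := by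
          apply lintegral_congr
          intro y
          rw [norm_sub_rev]
      _ ≤ C * ENNReal.ofReal ((3*ρ) ^ ((n:ℝ) - β)) := hCb z (3*ρ) (by linarith)
  calc (∫⁻ y in B1, (∫⁻ z in B2, ENNReal.ofReal (‖z - y‖ ^ (α - n)) ∂μ) ^ (1/(s-1)))
      ≤ K * ∫⁻ z in B2, (∫⁻ y in B1, ENNReal.ofReal (‖z - y‖ ^ (-β))) ∂μ := by
        rw [← step2]; exact step1
    _ ≤ K * ((C * ENNReal.ofReal ((3*ρ) ^ ((n:ℝ) - β))) * μ B2) := by gcongr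
    _ = c * (μ B2) ^ p * ENNReal.ofReal (ρ ^ ((n:ℝ) - β)) := by
        rw [hc, hK]
        have h3 : ENNReal.ofReal ((3*ρ) ^ ((n:ℝ) - β))
            = ENNReal.ofReal ((3:ℝ) ^ ((n:ℝ) - β)) * ENNReal.ofReal (ρ ^ ((n:ℝ) - β)) := by
          rw [← ENNReal.ofReal_mul (by positivity), ← Real.mul_rpow (by norm_num) hρ.le]
        have h4 : (μ B2) ^ (p - 1) * μ B2 = (μ B2) ^ p := by
          rw [show (μ B2) ^ p = (μ B2) ^ ((p-1)+1) by norm_num,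
            ENNReal.rpow_add_of_nonneg (p-1) 1 (by linarith) zero_le_one, ENNReal.rpow_one]
        rw [h3]
        calc (μ B2) ^ (p-1) * (C * (ENNReal.ofReal ((3:ℝ) ^ ((n:ℝ) - β))
                * ENNReal.ofReal (ρ ^ ((n:ℝ) - β))) * μ B2)
            = (C * ENNReal.ofReal ((3:ℝ) ^ ((n:ℝ) - β))) * ((μ B2)^(p-1) * μ B2)
                * ENNReal.ofReal (ρ ^ ((n:ℝ) - β)) := by ring
          _ = _ := by rw [h4]
    _ = c * (μ B2) ^ (1/(s-1)) * ENNReal.ofReal (ρ ^ ((n:ℝ) + (α - n)/(s-1))) := by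
        rw [hexp, hpdef]
end

section
/- Suppose w ∈ A₁^loc on ℝⁿ and let B be a ball of radius 1/2. Then there is a constant c(n) > 0 such that for all t ≥ 1, ∫_{(t+1/2)B} w dy ≤ (c(n)[w]_{A₁^loc} + 1) ∫_{tB} w dy, where λB denotes the ball concentric with B of radius λ/2. Consequently ∫_{tB} w dy grows at most geometrically in t. -/
/-!
Every point `y` of the annulus `ball z (R + 2ρ) \ ball z R` sees a ball of radius `ρ` inside
`ball y (4ρ) ∩ ball z R`. Integrating `w y · μ (ball y (4ρ) ∩ ball z R)` over the annulus and
swapping the order of integration therefore bounds `μ (ball 0 ρ) · ∫_annulus w` by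
`∫_{ball z R} ∫_{ball x (4ρ)} w ≤ [w] μ (ball 0 (4ρ)) ∫_{ball z R} w`, and
`μ (ball 0 (4ρ)) = 4ⁿ μ (ball 0 ρ)`. The theorem is the case `ρ = 1/8`, `R = t/2`.
-/

open MeasureTheory Set ENNReal Metric

theorem exists_ball_subset_ball_inter_ball {E : Type*} [NormedAddCommGroup E] [NormedSpace ℝ E]
    {y z : E} {ρ R : ℝ} (hρ : 0 < ρ) (hρR : ρ ≤ R) (hR : R ≤ dist y z)
    (hyz : dist y z < R + 2 * ρ) :
    ∃ p, ball p ρ ⊆ ball z R ∩ ball y (4 * ρ) := by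
  set d := dist y z
  have hd : 0 < d := by linarith
  have hc : (R - ρ) / d ≤ 1 := (div_le_one hd).2 (by linarith)
  have hc₀ : 0 ≤ (R - ρ) / d := div_nonneg (by linarith) hd.le
  set p := AffineMap.lineMap z y ((R - ρ) / d)
  have hpz : dist p z = R - ρ := by
    rw [dist_lineMap_left, Real.norm_of_nonneg hc₀, dist_comm, div_mul_cancel₀ _ hd.ne']
  have hpy : dist p y = d - (R - ρ) := by
    rw [dist_lineMap_right, Real.norm_of_nonneg (by linarith), dist_comm, sub_mul,
      div_mul_cancel₀ _ hd.ne', one_mul]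
  refine ⟨p, fun u hu => ⟨?_, ?_⟩⟩
  · exact mem_ball.2 <| (dist_triangle u p z).trans_lt (by rw [hpz]; linarith [mem_ball.1 hu])
  · exact mem_ball.2 <| (dist_triangle u p y).trans_lt (by rw [hpy]; linarith [mem_ball.1 hu])

section DoubleCounting

variable {X : Type*} [PseudoMetricSpace X] [SecondCountableTopology X] [MeasurableSpace X]
  [OpensMeasurableSpace X] {μ : Measure X} [SFinite μ]

theorem mul_setLIntegral_le_of_measure_ball_inter {g : X → ℝ≥0∞} (hg : AEMeasurable g μ)
    {S A : Set X} (hA : MeasurableSet A) {r : ℝ} {m K : ℝ≥0∞}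
    (hm : ∀ y ∈ A, m ≤ μ (ball y r ∩ S))
    (hK : ∀ᵐ x ∂μ, ∫⁻ y in ball x r, g y ∂μ ≤ K * g x) :
    m * ∫⁻ y in A, g y ∂μ ≤ K * ∫⁻ x in S, g x ∂μ := by
  have hF : AEMeasurable (Function.uncurry fun x y => (ball x r).indicator g y)
      ((μ.restrict S).prod (μ.restrict A)) := by
    have hball : MeasurableSet {p : X × X | dist p.2 p.1 < r} :=
      measurableSet_lt (measurable_snd.dist measurable_fst) measurable_const
    exact (hg.restrict.comp_snd).indicator hball
  calc m * ∫⁻ y in A, g y ∂μ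
      ≤ ∫⁻ y in A, m * g y ∂μ := lintegral_const_mul_le _ _
    _ ≤ ∫⁻ y in A, ∫⁻ x in S, (ball x r).indicator g y ∂μ ∂μ := by
      refine setLIntegral_mono' hA fun y hy => ?_
      have hslice : (fun x => (ball x r).indicator g y) = (ball y r).indicator fun _ => g y := by
        ext x; simp only [indicator, mem_ball, dist_comm y x]
      rw [hslice, lintegral_indicator measurableSet_ball, setLIntegral_const,
        Measure.restrict_apply measurableSet_ball, mul_comm]
      gcongr
      exact hm y hy
    _ = ∫⁻ x in S, ∫⁻ y in A, (ball x r).indicator g y ∂μ ∂μ := (lintegral_lintegral_swap hF).symm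
    _ ≤ ∫⁻ x in S, K * g x ∂μ := by
      refine lintegral_mono_ae <| (ae_restrict_of_ae hK).mono fun x hx => le_trans ?_ hx
      rw [lintegral_indicator measurableSet_ball]
      exact lintegral_mono' (Measure.restrict_mono subset_rfl Measure.restrict_le_self) le_rfl
    _ = K * ∫⁻ x in S, g x ∂μ := lintegral_const_mul'' K hg.restrict

end DoubleCounting

section AddHaar

variable {E : Type*} [NormedAddCommGroup E] [NormedSpace ℝ E] [FiniteDimensional ℝ E]
  [MeasurableSpace E] [BorelSpace E] {μ : Measure E} [μ.IsAddHaarMeasure]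

theorem setLIntegral_annulus_le {g : E → ℝ≥0∞} (hg : AEMeasurable g μ) {ρ R : ℝ} {K : ℝ≥0∞}
    (hρ : 0 < ρ) (hρR : ρ ≤ R) (hK : ∀ᵐ x ∂μ, ⨍⁻ y in ball x (4 * ρ), g y ∂μ ≤ K * g x)
    (z : E) :
    ∫⁻ y in ball z (R + 2 * ρ) \ ball z R, g y ∂μ
      ≤ ENNReal.ofReal (4 ^ Module.finrank ℝ E) * K * ∫⁻ y in ball z R, g y ∂μ := by
  have hm : ∀ y ∈ ball z (R + 2 * ρ) \ ball z R,
      μ (ball 0 ρ) ≤ μ (ball y (4 * ρ) ∩ ball z R) := by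
    rintro y ⟨hy, hyR⟩
    obtain ⟨p, hp⟩ :=
      exists_ball_subset_ball_inter_ball hρ hρR (not_lt.1 hyR) (mem_ball.1 hy)
    rw [← Measure.addHaar_ball_center μ p, inter_comm]
    exact measure_mono hp
  have hK' : ∀ᵐ x ∂μ, ∫⁻ y in ball x (4 * ρ), g y ∂μ ≤ μ (ball 0 (4 * ρ)) * K * g x := by
    filter_upwards [hK] with x hx
    have h₀ : μ (ball x (4 * ρ)) ≠ 0 := (measure_ball_pos μ x (by positivity)).ne'
    rw [← ENNReal.div_mul_cancel (b := ∫⁻ y in ball x (4 * ρ), g y ∂μ) h₀ measure_ball_lt_top.ne,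
      ← setLAverage_eq, Measure.addHaar_ball_center, mul_assoc, mul_comm]
    gcongr
  have hρ₀ : μ (ball 0 ρ) ≠ 0 := (measure_ball_pos μ 0 hρ).ne'
  rw [← ENNReal.mul_le_mul_iff_right hρ₀ measure_ball_lt_top.ne]
  calc μ (ball 0 ρ) * ∫⁻ y in ball z (R + 2 * ρ) \ ball z R, g y ∂μ
      ≤ μ (ball 0 (4 * ρ)) * K * ∫⁻ y in ball z R, g y ∂μ :=
        mul_setLIntegral_le_of_measure_ball_inter hg (measurableSet_ball.diff measurableSet_ball)
          hm hK'
    _ = μ (ball 0 ρ)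
          * (ENNReal.ofReal (4 ^ Module.finrank ℝ E) * K * ∫⁻ y in ball z R, g y ∂μ) := by
        rw [Measure.addHaar_ball_mul_of_pos μ 0 (by norm_num : (0 : ℝ) < 4)]
        ring

theorem setLIntegral_ball_add_le {g : E → ℝ≥0∞} (hg : AEMeasurable g μ) {ρ R : ℝ} {K : ℝ≥0∞}
    (hρ : 0 < ρ) (hρR : ρ ≤ R) (hK : ∀ᵐ x ∂μ, ⨍⁻ y in ball x (4 * ρ), g y ∂μ ≤ K * g x)
    (z : E) :
    ∫⁻ y in ball z (R + 2 * ρ), g y ∂μ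
      ≤ (ENNReal.ofReal (4 ^ Module.finrank ℝ E) * K + 1) * ∫⁻ y in ball z R, g y ∂μ := by
  rw [← union_sdiff_cancel (ball_subset_ball (by linarith : R ≤ R + 2 * ρ)),
    lintegral_union (measurableSet_ball.diff measurableSet_ball) disjoint_sdiff_right]
  calc ∫⁻ y in ball z R, g y ∂μ + ∫⁻ y in ball z (R + 2 * ρ) \ ball z R, g y ∂μ
      ≤ ∫⁻ y in ball z R, g y ∂μ
          + ENNReal.ofReal (4 ^ Module.finrank ℝ E) * K * ∫⁻ y in ball z R, g y ∂μ := by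
        gcongr
        exact setLIntegral_annulus_le hg hρ hρR hK z
    _ = _ := by ring

end AddHaar

/-- For `w ∈ A₁^loc` and `B` a ball of radius `1/2`, there is a dimensional constant
`c(n) > 0` such that `∫_{(t+1/2)B} w ≤ (c(n)·[w]_{A₁^loc} + 1)·∫_{tB} w` for all `t ≥ 1`,
where `λB` is the concentric ball of radius `λ/2`. -/
theorem A1loc_geometric_growth (n : ℕ) :
    ∃ c : ℝ, 0 < c ∧
      ∀ (w : EuclideanSpace ℝ (Fin n) → ℝ) (cw : ℝ), 0 ≤ cw →
        (∀ x, 0 ≤ w x) → MeasureTheory.LocallyIntegrable w volume →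
        (∀ᵐ x ∂(volume : Measure (EuclideanSpace ℝ (Fin n))),
          ∀ r : ℝ, 0 < r → r ≤ 1 → ⨍ y in Metric.ball x r, w y ≤ cw * w x) →
        ∀ (z : EuclideanSpace ℝ (Fin n)) (t : ℝ), 1 ≤ t →
          (∫ y in Metric.ball z ((t + 1/2) / 2), w y)
            ≤ (c * cw + 1) * ∫ y in Metric.ball z (t / 2), w y := by
  refine ⟨4 ^ n, by positivity, fun w cw hcw hw hloc hA1 z t ht => ?_⟩
  have hint (x : EuclideanSpace ℝ (Fin n)) (r : ℝ) : IntegrableOn w (ball x r) :=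
    (hloc.integrableOn_isCompact (isCompact_closedBall x r)).mono_set ball_subset_closedBall
  have hofReal_integral (x : EuclideanSpace ℝ (Fin n)) (r : ℝ) :
      ENNReal.ofReal (∫ y in ball x r, w y) = ∫⁻ y in ball x r, ENNReal.ofReal (w y) :=
    ofReal_integral_eq_lintegral_ofReal (hint x r) (ae_of_all _ hw)
  have hA1_lintegral : ∀ᵐ x ∂(volume : Measure (EuclideanSpace ℝ (Fin n))),
      ⨍⁻ y in ball x (4 * (1 / 8)), ENNReal.ofReal (w y) ∂volume
        ≤ ENNReal.ofReal cw * ENNReal.ofReal (w x) := by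
    filter_upwards [hA1] with x hx
    rw [setLAverage_eq, ← ofReal_setAverage (hint x _) (ae_of_all _ hw), ← ENNReal.ofReal_mul hcw]
    exact ENNReal.ofReal_le_ofReal (hx _ (by norm_num) (by norm_num))
  have hc : ENNReal.ofReal (4 ^ n) * ENNReal.ofReal cw + 1 = ENNReal.ofReal (4 ^ n * cw + 1) := by
    rw [ENNReal.ofReal_add (by positivity) zero_le_one, ENNReal.ofReal_one,
      ENNReal.ofReal_mul (by positivity)]
  have hgrowth := setLIntegral_ball_add_le hloc.aestronglyMeasurable.aemeasurable.ennreal_ofReal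
    (by norm_num) (by linarith : (1 : ℝ) / 8 ≤ t / 2) hA1_lintegral z
  rw [finrank_euclideanSpace_fin, show t / 2 + 2 * (1 / 8) = (t + 1 / 2) / 2 by ring,
    ← hofReal_integral, ← hofReal_integral, hc, ← ENNReal.ofReal_mul (by positivity)] at hgrowth
  exact (ENNReal.ofReal_le_ofReal_iff
    (mul_nonneg (by positivity) (setIntegral_nonneg measurableSet_ball fun x _ => hw x))).1 hgrowth
end
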